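/- Let k ≥ 3 and G = C(3k+1; {1,2,4}). For e = v_1 v_3, the set S = {v_2, v_{3k−2}, v_{3k}, v_{3k+1}} ∪ ⋃_{t=2}^{k−1} {v_{3t−2}, v_{3t−1}} is a vertex cut of G−e with |S| = 2k and c((G−e)−S) = k; hence τ(G−e) ≤ 2 < 2k/(k−1). -/

import Mathlib

open SimpleGraph

def circGraph (n : ℕ) (s : Set (ZMod n)) : SimpleGraph (ZMod n) where
  Adj i j := i ≠ j ∧ (i - j ∈ s ∨ j - i ∈ s)
  symm := ⟨fun i j h => ⟨h.1.symm, h.2.symm⟩⟩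
  loopless := ⟨fun i h => h.1 rfl⟩

/-- Number of connected components of `G - S`. -/
noncomputable def numComp {V : Type*} (G : SimpleGraph V) (S : Set V) : ℕ :=
  Nat.card ((G.induce Sᶜ).ConnectedComponent)

/-- `S` is a vertex cut: removing `S` leaves a disconnected graph. -/
def IsVertexCut {V : Type*} (G : SimpleGraph V) (S : Set V) : Prop :=
  1 < numComp G S

/-- Toughness: minimum of |S| / c(G - S) over vertex cuts `S`. -/
noncomputable def toughness {V : Type*} (G : SimpleGraph V) : ℝ :=
  sInf {x : ℝ | ∃ S : Set V, IsVertexCut G S ∧ x = (S.ncard : ℝ) / (numComp G S : ℝ)}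

def MinimallyTough {V : Type*} (G : SimpleGraph V) (t : ℝ) : Prop :=
  toughness G = t ∧ ∀ e ∈ G.edgeSet, toughness (G.deleteEdges {e}) < t

/-! The vertex `v_i` is `(i : ZMod (3k+1))`. Outside `S` only `1, 3, 6, …, 3k-3, 3k-1` survive,
and the only edges of `C(3k+1; {1,2,4})` among them are `v₁v₃`, which is deleted, and
`v_{3k-3}v_{3k-1}`. Hence `v ↦ ⌊v/3⌋` labels the components of `(G - e) - S` bijectively by
`{0, …, k-1}`, and `|S| = 3k+1 - (k+1)`. -/

namespace ZMod

variable {n : ℕ} [NeZero n]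

lemma eq_natCast_iff_val_eq {v : ZMod n} {m : ℕ} (hm : m < n) : v = m ↔ v.val = m := by
  rw [← (val_injective n).eq_iff, val_cast_of_lt hm]

lemma sub_eq_natCast_iff {u v : ZMod n} {d : ℕ} (hd : d < n) :
    u - v = d ↔ u.val = v.val + d ∨ u.val + n = v.val + d := by
  have hu := val_lt u
  have hv := val_lt v
  rw [sub_eq_iff_eq_add, ← (val_injective n).eq_iff, val_add, val_cast_of_lt hd, add_comm d]
  rcases Nat.lt_or_ge (v.val + d) n with h | h
  · rw [Nat.mod_eq_of_lt h]; omega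
  · rw [Nat.mod_eq_sub_mod h, Nat.mod_eq_of_lt (by omega)]; omega

lemma ncard_setOf_val_mem (A : Finset ℕ) (hA : ∀ m ∈ A, m < n) :
    {v : ZMod n | v.val ∈ A}.ncard = A.card := by
  rw [← Set.ncard_coe_finset A]
  exact Set.ncard_preimage_of_injective_subset_range (val_injective n)
    fun m hm => ⟨m, val_cast_of_lt (hA m hm)⟩

end ZMod

namespace SimpleGraph

variable {V α : Type*} {G : SimpleGraph V}

theorem card_connectedComponent_eq_of_labelling (f : V → α)
    (hadj : ∀ ⦃u v⦄, G.Adj u v → f u = f v) (hreach : ∀ ⦃u v⦄, f u = f v → G.Reachable u v)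
    (hf : Function.Surjective f) : Nat.card G.ConnectedComponent = Nat.card α := by
  have hwalk : ∀ u v (p : G.Walk u v), f u = f v := by
    intro u v p
    induction p with
    | nil => rfl
    | cons h _ ih => exact (hadj h).trans ih
  refine Nat.card_congr (Equiv.ofBijective (ConnectedComponent.lift f fun u v p _ => hwalk u v p)
    ⟨?_, ?_⟩)
  · rintro ⟨u⟩ ⟨v⟩ h
    exact ConnectedComponent.sound (hreach h)
  · intro a
    obtain ⟨v, rfl⟩ := hf a
    exact ⟨G.connectedComponentMk v, rfl⟩

theorem toughness_le_of_isVertexCut {S : Set V} (hS : IsVertexCut G S) :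
    toughness G ≤ S.ncard / numComp G S :=
  csInf_le ⟨0, by rintro x ⟨T, -, rfl⟩; positivity⟩ ⟨S, hS, rfl⟩

end SimpleGraph

def circDeleteEdge (k : ℕ) : SimpleGraph (ZMod (3*k+1)) :=
  (circGraph (3*k+1) {1, 2, 4}).deleteEdges
    {s(((1 : ℕ) : ZMod (3*k+1)), ((3 : ℕ) : ZMod (3*k+1)))}

def cutSet (k : ℕ) : Set (ZMod (3*k+1)) :=
  {v | v = ((2 : ℕ) : ZMod (3*k+1)) ∨ v = ((3*k-2 : ℕ) : ZMod (3*k+1)) ∨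
    v = ((3*k : ℕ) : ZMod (3*k+1)) ∨ v = ((3*k+1 : ℕ) : ZMod (3*k+1)) ∨
    ∃ t : ℕ, 2 ≤ t ∧ t ≤ k - 1 ∧
      (v = ((3*t-2 : ℕ) : ZMod (3*k+1)) ∨ v = ((3*t-1 : ℕ) : ZMod (3*k+1)))}

lemma mem_cutSet_iff {k : ℕ} (hk : 0 < k) (v : ZMod (3*k+1)) :
    v ∈ cutSet k ↔ v.val = 0 ∨ v.val = 2 ∨ v.val = 3*k-2 ∨ v.val = 3*k ∨
      (4 ≤ v.val ∧ v.val ≤ 3*k-4 ∧ v.val % 3 ≠ 0) := by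
  have hv := ZMod.val_lt v
  have hexists : (∃ t : ℕ, 2 ≤ t ∧ t ≤ k - 1 ∧
      (v = ((3*t-2 : ℕ) : ZMod (3*k+1)) ∨ v = ((3*t-1 : ℕ) : ZMod (3*k+1)))) ↔
      4 ≤ v.val ∧ v.val ≤ 3*k-4 ∧ v.val % 3 ≠ 0 := by
    constructor
    · rintro ⟨t, _, _, h⟩
      rw [ZMod.eq_natCast_iff_val_eq (by omega), ZMod.eq_natCast_iff_val_eq (by omega)] at h
      omega
    · intro h
      refine ⟨(v.val + 2) / 3, by omega, by omega, ?_⟩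
      rw [ZMod.eq_natCast_iff_val_eq (by omega), ZMod.eq_natCast_iff_val_eq (by omega)]
      omega
  simp only [cutSet, Set.mem_ofPred_eq, ZMod.natCast_self, ZMod.val_eq_zero, hexists]
  rw [ZMod.eq_natCast_iff_val_eq (by omega), ZMod.eq_natCast_iff_val_eq (by omega),
    ZMod.eq_natCast_iff_val_eq (by omega), ← ZMod.val_eq_zero]
  tauto

lemma val_div_three_lt {k : ℕ} (hk : 0 < k) {v : ZMod (3*k+1)} (hv : v ∉ cutSet k) :
    v.val / 3 < k := by
  have := ZMod.val_lt v
  rw [mem_cutSet_iff hk] at hv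
  omega

lemma val_div_three_eq_of_adj {k : ℕ} (hk : 3 ≤ k) {u v : ZMod (3*k+1)} (hu : u ∉ cutSet k)
    (hv : v ∉ cutSet k) (h : (circDeleteEdge k).Adj u v) : u.val / 3 = v.val / 3 := by
  have := ZMod.val_lt u
  have := ZMod.val_lt v
  rw [mem_cutSet_iff (by omega)] at hu hv
  obtain ⟨⟨-, hdiff⟩, hdel⟩ := deleteEdges_adj.1 h
  simp only [Set.mem_singleton_iff, Sym2.eq_iff] at hdel
  rw [ZMod.eq_natCast_iff_val_eq (by omega), ZMod.eq_natCast_iff_val_eq (by omega),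
    ZMod.eq_natCast_iff_val_eq (by omega), ZMod.eq_natCast_iff_val_eq (by omega)] at hdel
  simp only [Set.mem_insert_iff, Set.mem_singleton_iff, ← Nat.cast_one (R := ZMod (3*k+1)),
    ← Nat.cast_ofNat (R := ZMod (3*k+1)), ZMod.sub_eq_natCast_iff (show 1 < 3*k+1 by omega),
    ZMod.sub_eq_natCast_iff (show 2 < 3*k+1 by omega),
    ZMod.sub_eq_natCast_iff (show 4 < 3*k+1 by omega)] at hdiff
  omega

lemma circDeleteEdge_adj_of_val {k : ℕ} (hk : 2 ≤ k) {u v : ZMod (3*k+1)} (hu : u.val = 3*k-3)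
    (hv : v.val = 3*k-1) : (circDeleteEdge k).Adj u v := by
  have hne : u ≠ v := fun h => by subst h; omega
  refine deleteEdges_adj.2 ⟨⟨hne, Or.inr ?_⟩, ?_⟩
  · have : v - u = ((2 : ℕ) : ZMod (3*k+1)) := by
      rw [ZMod.sub_eq_natCast_iff (by omega)]; omega
    simp [this]
  · simp only [Set.mem_singleton_iff, Sym2.eq_iff]
    rw [ZMod.eq_natCast_iff_val_eq (by omega), ZMod.eq_natCast_iff_val_eq (by omega),
      ZMod.eq_natCast_iff_val_eq (by omega), ZMod.eq_natCast_iff_val_eq (by omega)]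
    omega

lemma reachable_of_val_div_three_eq {k : ℕ} (hk : 3 ≤ k) {u v : ↥(cutSet k)ᶜ}
    (h : u.1.val / 3 = v.1.val / 3) : ((circDeleteEdge k).induce (cutSet k)ᶜ).Reachable u v := by
  have hu := (mem_cutSet_iff (by omega) u.1).not.1 u.2
  have hv := (mem_cutSet_iff (by omega) v.1).not.1 v.2
  have := ZMod.val_lt u.1
  have := ZMod.val_lt v.1
  by_cases heq : u.1.val = v.1.val
  · rw [Subtype.ext (ZMod.val_injective _ heq)]
  · have hpair : u.1.val = 3*k-3 ∧ v.1.val = 3*k-1 ∨ u.1.val = 3*k-1 ∧ v.1.val = 3*k-3 := by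
      omega
    rcases hpair with ⟨hu', hv'⟩ | ⟨hu', hv'⟩
    · exact Adj.reachable (induce_adj.2 (circDeleteEdge_adj_of_val (by omega) hu' hv'))
    · exact Adj.reachable (induce_adj.2 (circDeleteEdge_adj_of_val (by omega) hv' hu').symm)

lemma numComp_cutSet {k : ℕ} (hk : 3 ≤ k) : numComp (circDeleteEdge k) (cutSet k) = k := by
  have hpos : 0 < k := by omega
  let label : ↥(cutSet k)ᶜ → Fin k := fun v => ⟨v.1.val / 3, val_div_three_lt hpos v.2⟩
  have hsurj : Function.Surjective label := by
    intro i
    have hlt : max 1 (3 * i.1) < 3*k+1 := by omega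
    have hval := ZMod.val_cast_of_lt hlt
    have hmem : ((max 1 (3 * i.1) : ℕ) : ZMod (3*k+1)) ∉ cutSet k := by
      rw [mem_cutSet_iff hpos, hval]; omega
    exact ⟨⟨_, hmem⟩, Fin.ext (by simp only [label, hval]; omega)⟩
  rw [numComp, card_connectedComponent_eq_of_labelling label
    (fun u v h => Fin.ext (val_div_three_eq_of_adj hk u.2 v.2 (induce_adj.1 h)))
    (fun u v h => reachable_of_val_div_three_eq hk (congrArg Fin.val h)) hsurj, Nat.card_fin]

lemma compl_cutSet_eq {k : ℕ} (hk : 2 ≤ k) : (cutSet k)ᶜ =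
    {v | v.val ∈ insert 1 (insert (3*k-1) ((Finset.Icc 1 (k-1)).image (3 * ·)))} := by
  ext v
  have := ZMod.val_lt v
  simp only [Set.mem_compl_iff, mem_cutSet_iff (by omega : 0 < k), Set.mem_ofPred_eq,
    Finset.mem_insert, Finset.mem_image, Finset.mem_Icc]
  constructor
  · intro h
    by_cases hv : v.val = 1 ∨ v.val = 3*k-1
    · tauto
    · exact Or.inr (Or.inr ⟨v.val / 3, by omega, by omega⟩)
  · rintro (h | h | ⟨t, _, h⟩) <;> omega

lemma ncard_cutSet {k : ℕ} (hk : 2 ≤ k) : (cutSet k).ncard = 2*k := by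
  have hcompl : ((cutSet k)ᶜ).ncard = k + 1 := by
    have h1 : 1 ∉ insert (3*k-1) ((Finset.Icc 1 (k-1)).image (3 * ·)) := by
      simp only [Finset.mem_insert, Finset.mem_image, Finset.mem_Icc]
      rintro (h | ⟨t, -, h⟩) <;> omega
    have h2 : 3*k-1 ∉ (Finset.Icc 1 (k-1)).image (3 * ·) := by
      simp only [Finset.mem_image, Finset.mem_Icc]
      rintro ⟨t, -, h⟩; omega
    rw [compl_cutSet_eq hk, ZMod.ncard_setOf_val_mem]
    · rw [Finset.card_insert_of_notMem h1, Finset.card_insert_of_notMem h2,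
        Finset.card_image_of_injective _ (fun a b h => by simpa using h), Nat.card_Icc]
      omega
    · simp only [Finset.mem_insert, Finset.mem_image, Finset.mem_Icc]
      rintro m (rfl | rfl | ⟨t, _, rfl⟩) <;> omega
  have := Set.ncard_add_ncard_compl (cutSet k)
  rw [hcompl, Nat.card_zmod] at this
  omega

theorem stmt15 (k : ℕ) (hk : 3 ≤ k) :
    let G := circGraph (3*k+1) {1, 2, 4}
    let G' := G.deleteEdges {s(((1 : ℕ) : ZMod (3*k+1)), ((3 : ℕ) : ZMod (3*k+1)))}
    let S : Set (ZMod (3*k+1)) :=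
      {v | v = ((2 : ℕ) : ZMod (3*k+1)) ∨ v = ((3*k-2 : ℕ) : ZMod (3*k+1)) ∨
        v = ((3*k : ℕ) : ZMod (3*k+1)) ∨ v = ((3*k+1 : ℕ) : ZMod (3*k+1)) ∨
        ∃ t : ℕ, 2 ≤ t ∧ t ≤ k - 1 ∧
          (v = ((3*t-2 : ℕ) : ZMod (3*k+1)) ∨ v = ((3*t-1 : ℕ) : ZMod (3*k+1)))}
    IsVertexCut G' S ∧ S.ncard = 2*k ∧ numComp G' S = k ∧
      toughness G' ≤ 2 ∧ (2 : ℝ) < (2*(k : ℝ)) / ((k : ℝ) - 1) := by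
  intro G G' S
  have hnum : numComp G' S = k := numComp_cutSet hk
  have hcard : S.ncard = 2*k := ncard_cutSet (by omega)
  have hcut : IsVertexCut G' S := by rw [IsVertexCut, hnum]; omega
  have hk' : (3 : ℝ) ≤ k := by exact_mod_cast hk
  refine ⟨hcut, hcard, hnum, ?_, ?_⟩
  · calc toughness G' ≤ S.ncard / numComp G' S := toughness_le_of_isVertexCut hcut
      _ = 2 := by rw [hcard, hnum]; push_cast; field_simp
  · rw [lt_div_iff₀ (by linarith)]
    linarith
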